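/- Let C, B > 0 and δ > 0 be such that h_− := (B − √(B² − 4Cδ))/2 is well-defined and lies in (0,1). Let h : [0,∞) → [0,∞) be continuous, differentiable, with h(0) < h_−, and suppose h'(τ) ≤ Cδ − B h(τ) + h(τ)⁵ for all τ > 0. Then h(τ) ∈ [0, h_−] for all τ ≥ 0. -/

import Mathlib

/-!
At the smaller root `hm` of `x² - B x + C δ` the right-hand side of the differential inequality
is negative, because `hm⁵ < hm²` for `0 < hm < 1`. Hence `h` can only reach the level `hm` with
negative derivative, and a fencing argument shows it never crosses it.
-/

open Set Filter Topology

theorem image_le_of_deriv_neg_at_level {f : ℝ → ℝ} {a m : ℝ}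
    (hcont : ContinuousOn f (Ici a)) (hdiff : ∀ t, a < t → DifferentiableAt ℝ f t)
    (ha : f a < m) (hlevel : ∀ t, a < t → f t = m → deriv f t < 0) :
    ∀ t, a ≤ t → f t ≤ m := by
  -- Fencing needs right derivatives on a closed interval, so start it just after `a`.
  have hnear : ∀ᶠ t in 𝓝[≥] a, f t < m := (hcont a self_mem_Ici).eventually (gt_mem_nhds ha)
  obtain ⟨u, hau : a < u, hu⟩ := mem_nhdsGE_iff_exists_Ico_subset.1 hnear
  intro t hat
  rcases lt_or_ge t u with htu | hut
  · exact (hu ⟨hat, htu⟩).le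
  obtain ⟨ε, haε, hεu⟩ := exists_between hau
  have hfence := image_le_of_deriv_right_lt_deriv_boundary (f' := deriv f) (B := fun _ ↦ m)
    (B' := fun _ ↦ 0) (a := ε) (b := t)
    (hcont.mono (Icc_subset_Ici_iff (hεu.le.trans hut) |>.2 haε.le))
    (fun x hx ↦ (hdiff x (haε.trans_le hx.1)).hasDerivAt.hasDerivWithinAt)
    (hu ⟨haε.le, hεu⟩).le (fun _ ↦ hasDerivAt_const _ _)
    (fun x hx ↦ hlevel x (haε.trans_le hx.1))
  exact hfence ⟨hεu.le.trans hut, le_rfl⟩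

theorem sq_sub_mul_add_eq_zero_of_eq_sub_sqrt_div_two {b c x : ℝ} (hdisc : 0 ≤ b ^ 2 - 4 * c)
    (hx : x = (b - Real.sqrt (b ^ 2 - 4 * c)) / 2) : x ^ 2 - b * x + c = 0 := by
  have hsq := Real.sq_sqrt hdisc
  subst hx
  linear_combination hsq / 4

theorem ode_barrier_lemma_general
    (C B δ : ℝ)
    (hdisc : 0 ≤ B ^ 2 - 4 * C * δ)
    (hm : ℝ) (hhm : hm = (B - Real.sqrt (B ^ 2 - 4 * C * δ)) / 2)
    (hm_mem : hm ∈ Ioo (0 : ℝ) 1)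
    (h : ℝ → ℝ)
    (hcont : ContinuousOn h (Ici (0 : ℝ)))
    (hdiff : ∀ τ : ℝ, 0 < τ → DifferentiableAt ℝ h τ)
    (hnn : ∀ τ : ℝ, 0 ≤ τ → 0 ≤ h τ)
    (h0 : h 0 < hm)
    (hineq : ∀ τ : ℝ, 0 < τ → deriv h τ ≤ C * δ - B * h τ + h τ ^ 5) :
    ∀ τ : ℝ, 0 ≤ τ → h τ ∈ Icc (0 : ℝ) hm := by
  have hroot : hm ^ 2 - B * hm + C * δ = 0 :=
    sq_sub_mul_add_eq_zero_of_eq_sub_sqrt_div_two (by linarith) (by rw [hhm, mul_assoc])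
  have hneg : C * δ - B * hm + hm ^ 5 < 0 := by
    linarith [pow_lt_pow_right_of_lt_one₀ hm_mem.1 hm_mem.2 (by norm_num : 2 < 5)]
  have hlevel (τ : ℝ) (hτ : 0 < τ) (hτm : h τ = hm) : deriv h τ < 0 := by
    have := hineq τ hτ
    rw [hτm] at this
    linarith
  exact fun τ hτ ↦ ⟨hnn τ hτ, image_le_of_deriv_neg_at_level hcont hdiff h0 hlevel τ hτ⟩

theorem ode_barrier_lemma
    (C B δ : ℝ) (hC : 0 < C) (hB : 0 < B) (hδ : 0 < δ)
    (hdisc : 0 ≤ B ^ 2 - 4 * C * δ)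
    (hm : ℝ) (hhm : hm = (B - Real.sqrt (B ^ 2 - 4 * C * δ)) / 2)
    (hm_mem : hm ∈ Ioo (0 : ℝ) 1)
    (h : ℝ → ℝ)
    (hcont : ContinuousOn h (Ici (0 : ℝ)))
    (hdiff : ∀ τ : ℝ, 0 < τ → DifferentiableAt ℝ h τ)
    (hnn : ∀ τ : ℝ, 0 ≤ τ → 0 ≤ h τ)
    (h0 : h 0 < hm)
    (hineq : ∀ τ : ℝ, 0 < τ → deriv h τ ≤ C * δ - B * h τ + h τ ^ 5) :
    ∀ τ : ℝ, 0 ≤ τ → h τ ∈ Icc (0 : ℝ) hm :=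
  ode_barrier_lemma_general C B δ hdisc hm hhm hm_mem h hcont hdiff hnn h0 hineq
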